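/- Comparison of vorticity and modulated vorticity. Let N > 0, let v : ℝ² → ℝ² be a bounded continuously differentiable vector field, and let u : ℝ² → ℂ be twice continuously differentiable with 1−|u|² ∈ L²(ℝ²). Define μ := curl j with j := ⟨iu, ∇u⟩, and the modulated vorticity μ̃ := curl( ⟨iu, ∇u − iuNv⟩ + Nv ). Then: (i) pointwise, μ̃ − μ = N curl( (1−|u|²) v ); and (ii) for every continuously differentiable ξ : ℝ² → ℝ with compact support, | ∫_{ℝ²} ξ (μ − μ̃) | ≤ N ‖v‖_{L^∞(ℝ²)} ‖∇ξ‖_{L²(ℝ²)} ‖1−|u|²‖_{L²(ℝ²)}. -/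

import Mathlib

open MeasureTheory Complex

noncomputable section

/-- Real inner product on `ℂ`: `⟨x, y⟩ = Re(x̄ · y)`. -/
def rinner (x y : ℂ) : ℝ := (starRingEnd ℂ x * y).re

/-- Partial derivative in the `k`-th coordinate direction. -/
def pd {n : ℕ} {E : Type*} [NormedAddCommGroup E] [NormedSpace ℝ E]
    (k : Fin n) (f : (Fin n → ℝ) → E) (x : Fin n → ℝ) : E :=
  fderiv ℝ f x (Pi.single k 1)

/-- Two-dimensional curl. -/
def curl2 (w : (Fin 2 → ℝ) → (Fin 2 → ℝ)) (x : Fin 2 → ℝ) : ℝ :=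
  pd 0 (fun y => w y 1) x - pd 1 (fun y => w y 0) x

/-- Supercurrent `j := ⟨iu, ∇u⟩`. -/
def scur (u : (Fin 2 → ℝ) → ℂ) (k : Fin 2) (x : Fin 2 → ℝ) : ℝ :=
  rinner (Complex.I * u x) (pd k u x)

/-- Vorticity `μ := curl j`. -/
def vort (u : (Fin 2 → ℝ) → ℂ) (x : Fin 2 → ℝ) : ℝ := curl2 (fun y k => scur u k y) x

/-- Modulated vorticity `μ̃ := curl(⟨iu, ∇u − iuNv⟩ + Nv)`. -/
def mvort (N : ℝ) (v : (Fin 2 → ℝ) → (Fin 2 → ℝ)) (u : (Fin 2 → ℝ) → ℂ)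
    (x : Fin 2 → ℝ) : ℝ :=
  curl2 (fun y k => rinner (Complex.I * u y)
      (pd k u y - Complex.I * u y * Complex.ofReal (N * v y k)) + N * v y k) x

lemma rinner_eq (a b : ℂ) : rinner a b = a.re * b.re + a.im * b.im := by
  simp [rinner, Complex.mul_re]

lemma norm_sq_c (a : ℂ) : ‖a‖^2 = a.re^2 + a.im^2 := by
  rw [← Complex.normSq_eq_norm_sq, Complex.normSq_apply]; ring

lemma contDiff_pd {u : (Fin 2 → ℝ) → ℂ} (hu : ContDiff ℝ 2 u) (k : Fin 2) :
    ContDiff ℝ 1 (fun y => pd k u y) :=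
  (hu.fderiv_right (by norm_num)).clm_apply contDiff_const

lemma contDiff_scur {u : (Fin 2 → ℝ) → ℂ} (hu : ContDiff ℝ 2 u) (k : Fin 2) :
    ContDiff ℝ 1 (fun y => scur u k y) := by
  have h1 : ContDiff ℝ 1 (fun y => pd k u y) := contDiff_pd hu k
  have h2 : ContDiff ℝ 1 u := hu.of_le (by norm_num)
  have heq : (fun y => scur u k y)
      = fun y => (-(u y).im) * (pd k u y).re + (u y).re * (pd k u y).im := by
    funext y
    simp [scur, rinner_eq, Complex.mul_re, Complex.mul_im]
  rw [heq]
  exact (((Complex.imCLM.contDiff.comp h2).neg).mul (Complex.reCLM.contDiff.comp h1)).add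
    ((Complex.reCLM.contDiff.comp h2).mul (Complex.imCLM.contDiff.comp h1))

lemma contDiff_one_sub_norm_sq {u : (Fin 2 → ℝ) → ℂ} (hu : ContDiff ℝ 2 u) :
    ContDiff ℝ 1 (fun y => 1 - ‖u y‖^2) := by
  have h2 : ContDiff ℝ 1 u := hu.of_le (by norm_num)
  have heq : (fun y => 1 - ‖u y‖^2) = fun y => 1 - ((u y).re^2 + (u y).im^2) := by
    funext y; rw [norm_sq_c]
  rw [heq]
  exact contDiff_const.sub (((Complex.reCLM.contDiff.comp h2).pow 2).add
    ((Complex.imCLM.contDiff.comp h2).pow 2))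

lemma pd_add {f g : (Fin 2 → ℝ) → ℝ} {x : Fin 2 → ℝ} (k : Fin 2)
    (hf : DifferentiableAt ℝ f x) (hg : DifferentiableAt ℝ g x) :
    pd k (fun y => f y + g y) x = pd k f x + pd k g x := by
  simp [pd, fderiv_fun_add hf hg]

lemma pd_const_mul {f : (Fin 2 → ℝ) → ℝ} {x : Fin 2 → ℝ} (k : Fin 2) (c : ℝ)
    (hf : DifferentiableAt ℝ f x) :
    pd k (fun y => c * f y) x = c * pd k f x := by
  simp [pd, fderiv_const_mul hf]

/-- comparison of vorticity and modulated vorticity.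
(i) pointwise `μ̃ − μ = N curl((1−|u|²)v)`; (ii) for every `C¹` compactly supported
`ξ`, `|∫ ξ(μ − μ̃)| ≤ N ‖v‖_∞ ‖∇ξ‖_{L²} ‖1−|u|²‖_{L²}`. -/
theorem vorticity_comparison
    (N : ℝ) (hN : 0 < N)
    (v : (Fin 2 → ℝ) → (Fin 2 → ℝ)) (hv : ContDiff ℝ 1 v)
    (Mv : ℝ) (hMv : 0 ≤ Mv) (hvb : ∀ x, Real.sqrt ((v x 0)^2 + (v x 1)^2) ≤ Mv)
    (u : (Fin 2 → ℝ) → ℂ) (hu : ContDiff ℝ 2 u)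
    (hu2 : Integrable (fun x => (1 - ‖u x‖^2)^2)) :
    (∀ x, mvort N v u x - vort u x
        = N * curl2 (fun y k => (1 - ‖u y‖^2) * v y k) x)
    ∧ (∀ ξ : (Fin 2 → ℝ) → ℝ, ContDiff ℝ 1 ξ → HasCompactSupport ξ →
        |∫ x, ξ x * (vort u x - mvort N v u x)|
          ≤ N * Mv * Real.sqrt (∫ x, ((pd 0 ξ x)^2 + (pd 1 ξ x)^2))
              * Real.sqrt (∫ x, (1 - ‖u x‖^2)^2)) := by
  -- component functions of v are C¹
  have hvk : ∀ k : Fin 2, ContDiff ℝ 1 (fun y => v y k) := fun k => by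
    exact (ContinuousLinearMap.proj k).contDiff.comp hv
  -- the modulated current: W k y = (1 - ‖u y‖²) * v y k
  have hW : ∀ k : Fin 2, ContDiff ℝ 1 (fun y => (1 - ‖u y‖^2) * v y k) := fun k =>
    (contDiff_one_sub_norm_sq hu).mul (hvk k)
  -- pointwise algebraic identity for the modulated current
  have key : ∀ (y : Fin 2 → ℝ) (k : Fin 2),
      rinner (Complex.I * u y) (pd k u y - Complex.I * u y * Complex.ofReal (N * v y k))
        + N * v y k
      = scur u k y + N * ((1 - ‖u y‖^2) * v y k) := by
    intro y k
    have h := norm_sq_c (u y)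
    simp only [rinner_eq, scur, Complex.sub_re, Complex.sub_im, Complex.mul_re, Complex.mul_im,
      Complex.I_re, Complex.I_im, Complex.ofReal_re, Complex.ofReal_im]
    rw [h]; ring
  -- part (i)
  have hmv : ∀ x, mvort N v u x - vort u x
      = N * curl2 (fun y k => (1 - ‖u y‖^2) * v y k) x := by
    intro x
    have heq : (fun y (k : Fin 2) => rinner (Complex.I * u y)
        (pd k u y - Complex.I * u y * Complex.ofReal (N * v y k)) + N * v y k)
        = fun y k => scur u k y + N * ((1 - ‖u y‖^2) * v y k) := by
      funext y k; exact key y k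
    have hd1 : ∀ k : Fin 2, DifferentiableAt ℝ (fun y => scur u k y) x :=
      fun k => ((contDiff_scur hu k).differentiable one_ne_zero) x
    have hd2 : ∀ k : Fin 2, DifferentiableAt ℝ (fun y => N * ((1 - ‖u y‖^2) * v y k)) x :=
      fun k => (((hW k).differentiable one_ne_zero) x).const_mul N
    rw [mvort, heq]
    unfold vort curl2
    rw [pd_add 0 (hd1 1) (hd2 1), pd_add 1 (hd1 0) (hd2 0),
      pd_const_mul 0 N (((hW 1).differentiable one_ne_zero) x),
      pd_const_mul 1 N (((hW 0).differentiable one_ne_zero) x)]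
    ring
  refine ⟨hmv, ?_⟩
  intro ξ hξ hξc
  -- notation
  have hfc : Continuous (fun y => 1 - ‖u y‖^2) := (contDiff_one_sub_norm_sq hu).continuous
  have hξcont : Continuous ξ := hξ.continuous
  have hψc : ∀ k : Fin 2, Continuous (fun x => pd k ξ x) :=
    fun k => (hξ.continuous_fderiv one_ne_zero).clm_apply continuous_const
  have hψsupp : ∀ k : Fin 2, HasCompactSupport (fun x => pd k ξ x) := by
    intro k
    exact hξc.fderiv_apply ℝ (Pi.single k 1)
  have hWc : ∀ k : Fin 2, Continuous (fun y => (1 - ‖u y‖^2) * v y k) :=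
    fun k => (hW k).continuous
  have hdWc : ∀ (k j : Fin 2), Continuous (fun x => pd j (fun y => (1 - ‖u y‖^2) * v y k) x) :=
    fun k j => ((hW k).continuous_fderiv one_ne_zero).clm_apply continuous_const
  -- integration by parts in each direction
  have ibp : ∀ (k j : Fin 2),
      ∫ x, ξ x * pd j (fun y => (1 - ‖u y‖^2) * v y k) x
        = - ∫ x, pd j ξ x * ((1 - ‖u x‖^2) * v x k) := by
    intro k j
    have h1 : Integrable (fun x => fderiv ℝ ξ x (Pi.single j 1) * ((1 - ‖u x‖^2) * v x k)) :=
      ((hψc j).mul (hWc k)).integrable_of_hasCompactSupport ((hψsupp j).mul_right)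
    have h2 : Integrable (fun x =>
        ξ x * fderiv ℝ (fun y => (1 - ‖u y‖^2) * v y k) x (Pi.single j 1)) :=
      (hξcont.mul (hdWc k j)).integrable_of_hasCompactSupport (hξc.mul_right)
    have h3 : Integrable (fun x => ξ x * ((1 - ‖u x‖^2) * v x k)) :=
      (hξcont.mul (hWc k)).integrable_of_hasCompactSupport (hξc.mul_right)
    exact integral_mul_fderiv_eq_neg_fderiv_mul_of_integrable h1 h2 h3
      (fun x _ => hξ.differentiable one_ne_zero x) (fun x _ => (hW k).differentiable one_ne_zero x)
  -- integrabilities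
  have hI1 : Integrable (fun x => ξ x * pd 0 (fun y => (1 - ‖u y‖^2) * v y 1) x) :=
    (hξcont.mul (hdWc 1 0)).integrable_of_hasCompactSupport (hξc.mul_right)
  have hI2 : Integrable (fun x => ξ x * pd 1 (fun y => (1 - ‖u y‖^2) * v y 0) x) :=
    (hξcont.mul (hdWc 0 1)).integrable_of_hasCompactSupport (hξc.mul_right)
  have hI3 : Integrable (fun x => pd 0 ξ x * ((1 - ‖u x‖^2) * v x 1)) :=
    ((hψc 0).mul (hWc 1)).integrable_of_hasCompactSupport ((hψsupp 0).mul_right)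
  have hI4 : Integrable (fun x => pd 1 ξ x * ((1 - ‖u x‖^2) * v x 0)) :=
    ((hψc 1).mul (hWc 0)).integrable_of_hasCompactSupport ((hψsupp 1).mul_right)
  -- rewrite the integral using part (i) and IBP
  have split : ∫ x, ξ x * (vort u x - mvort N v u x)
      = N * ∫ x, (pd 0 ξ x * ((1 - ‖u x‖^2) * v x 1)
          - pd 1 ξ x * ((1 - ‖u x‖^2) * v x 0)) := by
    have e1 : ∀ x, ξ x * (vort u x - mvort N v u x)
        = (-N) * (ξ x * pd 0 (fun y => (1 - ‖u y‖^2) * v y 1) x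
            - ξ x * pd 1 (fun y => (1 - ‖u y‖^2) * v y 0) x) := by
      intro x
      have h := hmv x
      have h2 : vort u x - mvort N v u x
          = -(N * curl2 (fun y k => (1 - ‖u y‖^2) * v y k) x) := by linarith
      rw [h2, curl2]; ring
    rw [integral_congr_ae (Filter.Eventually.of_forall e1), integral_const_mul,
      integral_sub hI1 hI2, ibp 1 0, ibp 0 1, integral_sub hI3 hI4]
    ring
  -- pointwise Cauchy-Schwarz bound
  have cs : ∀ a₀ a₁ b₀ b₁ : ℝ, |a₀*b₁ - a₁*b₀|
      ≤ Real.sqrt (a₀^2+a₁^2) * Real.sqrt (b₀^2+b₁^2) := by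
    intro a₀ a₁ b₀ b₁
    have h1 : (a₀*b₁ - a₁*b₀)^2 ≤ (a₀^2+a₁^2)*(b₀^2+b₁^2) := by
      nlinarith [sq_nonneg (a₀*b₀+a₁*b₁)]
    calc |a₀*b₁-a₁*b₀| = Real.sqrt ((a₀*b₁-a₁*b₀)^2) := (Real.sqrt_sq_eq_abs _).symm
      _ ≤ Real.sqrt ((a₀^2+a₁^2)*(b₀^2+b₁^2)) := Real.sqrt_le_sqrt h1
      _ = Real.sqrt (a₀^2+a₁^2) * Real.sqrt (b₀^2+b₁^2) := Real.sqrt_mul (by positivity) _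
  have ptw : ∀ x, |pd 0 ξ x * ((1-‖u x‖^2) * v x 1) - pd 1 ξ x * ((1-‖u x‖^2) * v x 0)|
      ≤ Real.sqrt ((pd 0 ξ x)^2 + (pd 1 ξ x)^2) * (Mv * |1-‖u x‖^2|) := by
    intro x
    have h1 := cs (pd 0 ξ x) (pd 1 ξ x) (v x 0) (v x 1)
    have h2 := hvb x
    have hF : (0:ℝ) ≤ Real.sqrt ((pd 0 ξ x)^2 + (pd 1 ξ x)^2) := Real.sqrt_nonneg _
    have e : pd 0 ξ x * ((1-‖u x‖^2) * v x 1) - pd 1 ξ x * ((1-‖u x‖^2) * v x 0)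
        = (1-‖u x‖^2) * (pd 0 ξ x * v x 1 - pd 1 ξ x * v x 0) := by ring
    rw [e, abs_mul]
    calc |1-‖u x‖^2| * |pd 0 ξ x * v x 1 - pd 1 ξ x * v x 0|
        ≤ |1-‖u x‖^2| * (Real.sqrt ((pd 0 ξ x)^2+(pd 1 ξ x)^2)
            * Real.sqrt ((v x 0)^2+(v x 1)^2)) :=
          mul_le_mul_of_nonneg_left h1 (abs_nonneg _)
      _ ≤ |1-‖u x‖^2| * (Real.sqrt ((pd 0 ξ x)^2+(pd 1 ξ x)^2) * Mv) :=
          mul_le_mul_of_nonneg_left (mul_le_mul_of_nonneg_left h2 hF) (abs_nonneg _)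
      _ = Real.sqrt ((pd 0 ξ x)^2+(pd 1 ξ x)^2) * (Mv * |1-‖u x‖^2|) := by ring
  -- the gradient magnitude F
  have hFc : Continuous (fun x => Real.sqrt ((pd 0 ξ x)^2 + (pd 1 ξ x)^2)) :=
    Real.continuous_sqrt.comp (((hψc 0).pow 2).add ((hψc 1).pow 2))
  have hGsupp : HasCompactSupport (fun x => (pd 0 ξ x)^2 + (pd 1 ξ x)^2) := by
    have h0 : HasCompactSupport (fun x => (pd 0 ξ x)^2) := by
      have := (hψsupp 0).mul_right (f' := fun x => pd 0 ξ x)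
      rw [show (fun x => (pd 0 ξ x)^2) = (fun x => pd 0 ξ x) * (fun x => pd 0 ξ x) by
        funext x; simp [pow_two]]
      exact this
    have h1 : HasCompactSupport (fun x => (pd 1 ξ x)^2) := by
      have := (hψsupp 1).mul_right (f' := fun x => pd 1 ξ x)
      rw [show (fun x => (pd 1 ξ x)^2) = (fun x => pd 1 ξ x) * (fun x => pd 1 ξ x) by
        funext x; simp [pow_two]]
      exact this
    exact h0.add h1
  have hFsupp : HasCompactSupport (fun x => Real.sqrt ((pd 0 ξ x)^2 + (pd 1 ξ x)^2)) :=
    hGsupp.comp_left (g := Real.sqrt) Real.sqrt_zero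
  -- MemLp facts
  have hmemF : MemLp (fun x => Real.sqrt ((pd 0 ξ x)^2 + (pd 1 ξ x)^2))
      (ENNReal.ofReal 2) (volume : Measure (Fin 2 → ℝ)) := by
    rw [ENNReal.ofReal_ofNat]
    exact hFc.memLp_of_hasCompactSupport (μ := volume) hFsupp
  have hmemf : MemLp (fun x => |1 - ‖u x‖^2|) (ENNReal.ofReal 2)
      (volume : Measure (Fin 2 → ℝ)) := by
    rw [ENNReal.ofReal_ofNat]
    rw [memLp_two_iff_integrable_sq hfc.abs.aestronglyMeasurable]
    have : (fun x => |1 - ‖u x‖^2|^2) = fun x => (1 - ‖u x‖^2)^2 := by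
      funext x; rw [_root_.sq_abs]
    rwa [this]
  -- Hölder / Cauchy-Schwarz for integrals
  have holder : ∫ x, Real.sqrt ((pd 0 ξ x)^2 + (pd 1 ξ x)^2) * |1 - ‖u x‖^2|
      ≤ Real.sqrt (∫ x, ((pd 0 ξ x)^2 + (pd 1 ξ x)^2))
        * Real.sqrt (∫ x, (1 - ‖u x‖^2)^2) := by
    have hpq : Real.HolderConjugate 2 2 := Real.HolderConjugate.two_two
    have h := integral_mul_le_Lp_mul_Lq_of_nonneg hpq
      (Filter.Eventually.of_forall (fun x => Real.sqrt_nonneg _))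
      (Filter.Eventually.of_forall (fun x => abs_nonneg _)) hmemF hmemf
    have e1 : (∫ x, Real.sqrt ((pd 0 ξ x)^2 + (pd 1 ξ x)^2) ^ (2:ℝ))
        = ∫ x, ((pd 0 ξ x)^2 + (pd 1 ξ x)^2) := by
      congr 1; funext x
      rw [show ((2:ℝ) = ((2:ℕ):ℝ)) by norm_num, Real.rpow_natCast,
        Real.sq_sqrt (by positivity)]
    have e2 : (∫ x, |1 - ‖u x‖^2| ^ (2:ℝ)) = ∫ x, (1 - ‖u x‖^2)^2 := by
      congr 1; funext x
      rw [show ((2:ℝ) = ((2:ℕ):ℝ)) by norm_num, Real.rpow_natCast, _root_.sq_abs]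
    rw [e1, e2] at h
    calc ∫ x, Real.sqrt ((pd 0 ξ x)^2 + (pd 1 ξ x)^2) * |1 - ‖u x‖^2| ≤
        (∫ x, ((pd 0 ξ x)^2 + (pd 1 ξ x)^2)) ^ ((1:ℝ)/2)
          * (∫ x, (1 - ‖u x‖^2)^2) ^ ((1:ℝ)/2) := h
      _ = Real.sqrt (∫ x, ((pd 0 ξ x)^2 + (pd 1 ξ x)^2))
          * Real.sqrt (∫ x, (1 - ‖u x‖^2)^2) := by
          rw [Real.sqrt_eq_rpow, Real.sqrt_eq_rpow]
  -- final assembly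
  have hIntRhs : Integrable (fun x => Real.sqrt ((pd 0 ξ x)^2 + (pd 1 ξ x)^2)
      * (Mv * |1 - ‖u x‖^2|)) :=
    (hFc.mul (continuous_const.mul hfc.abs)).integrable_of_hasCompactSupport
      (hFsupp.mul_right)
  rw [split]
  calc |N * ∫ x, (pd 0 ξ x * ((1 - ‖u x‖^2) * v x 1)
          - pd 1 ξ x * ((1 - ‖u x‖^2) * v x 0))|
      = N * |∫ x, (pd 0 ξ x * ((1 - ‖u x‖^2) * v x 1)
          - pd 1 ξ x * ((1 - ‖u x‖^2) * v x 0))| := by rw [abs_mul, abs_of_pos hN]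
    _ ≤ N * ∫ x, |pd 0 ξ x * ((1 - ‖u x‖^2) * v x 1)
          - pd 1 ξ x * ((1 - ‖u x‖^2) * v x 0)| := by
        apply mul_le_mul_of_nonneg_left _ hN.le
        exact
          norm_integral_le_integral_norm (μ := volume) (fun x => pd 0 ξ x * ((1 - ‖u x‖^2) * v x 1)
            - pd 1 ξ x * ((1 - ‖u x‖^2) * v x 0))
    _ ≤ N * ∫ x, Real.sqrt ((pd 0 ξ x)^2 + (pd 1 ξ x)^2) * (Mv * |1 - ‖u x‖^2|) := by
        apply mul_le_mul_of_nonneg_left _ hN.le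
        exact integral_mono (hI3.sub hI4).abs hIntRhs ptw
    _ = N * (Mv * ∫ x, Real.sqrt ((pd 0 ξ x)^2 + (pd 1 ξ x)^2) * |1 - ‖u x‖^2|) := by
        have e : ∫ x, Real.sqrt ((pd 0 ξ x)^2 + (pd 1 ξ x)^2) * (Mv * |1 - ‖u x‖^2|)
            = Mv * ∫ x, Real.sqrt ((pd 0 ξ x)^2 + (pd 1 ξ x)^2) * |1 - ‖u x‖^2| := by
          rw [← integral_const_mul]
          congr 1
          funext x
          ring
        rw [e]
    _ ≤ N * (Mv * (Real.sqrt (∫ x, ((pd 0 ξ x)^2 + (pd 1 ξ x)^2))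
          * Real.sqrt (∫ x, (1 - ‖u x‖^2)^2))) :=
        mul_le_mul_of_nonneg_left (mul_le_mul_of_nonneg_left holder hMv) hN.le
    _ = N * Mv * Real.sqrt (∫ x, ((pd 0 ξ x)^2 + (pd 1 ξ x)^2))
          * Real.sqrt (∫ x, (1 - ‖u x‖^2)^2) := by ring
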